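/- arXiv:0810.4727 — 3 statements merged into one kernel-verified Lean document; each statement's English description precedes it below -/
import Mathlib

section
/- Let θ > 1 and N ≥ 1 be given, and for k = 0,1,...,N define L(θ,k) = Σ_{i=0}^{k} C(N,i)(1 - 1/θ)^i (1/θ)^{N-i} and L_P(θ,k) = Σ_{i=0}^{k} ((N ln θ)^i / i!) exp(−N ln θ). Then L(θ,0) = L_P(θ,0), and L(θ,k) > L_P(θ,k) for every k = 1,...,N. -/
/-!
Put `μ = log θ`, so that `1/θ = exp (-μ)` and the success probability `p = 1 - exp (-μ)` is the
probability that a Poisson(`μ`) variable is nonzero. Induct on `N`: the Poisson law of rate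
`(N + 1) μ` is that of rate `N μ` convolved with Poisson(`μ`), while Binomial(`N + 1`, `p`) adds
one Bernoulli(`p`) trial. Given the inequality for `N`, monotonicity of the binomial CDF lets the
Poisson(`μ`) summand be replaced by a Bernoulli variable with success probability
`P(1 ≤ Po(μ) ≤ k + 1) < p`, and the recursion for the binomial CDF then gives the strict inequality
for `N + 1` and every `k ≥ 1`. At `k = 0` both sides are `exp (-N μ)`.
-/

open Finset Real

open scoped Nat

noncomputable def binomialCDF (p : ℝ) (n k : ℕ) : ℝ :=
  ∑ i ∈ range (k + 1), (n.choose i : ℝ) * p ^ i * (1 - p) ^ (n - i)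

noncomputable def poissonProb (μ : ℝ) (i : ℕ) : ℝ :=
  μ ^ i / i ! * exp (-μ)

noncomputable def poissonCDF (μ : ℝ) (k : ℕ) : ℝ :=
  ∑ i ∈ range (k + 1), poissonProb μ i

section Binomial

variable {p : ℝ}

@[simp]
lemma binomialCDF_zero_left (p : ℝ) (k : ℕ) : binomialCDF p 0 k = 1 := by
  rw [binomialCDF, sum_range_succ']
  simp

@[simp]
lemma binomialCDF_zero_right (p : ℝ) (n : ℕ) : binomialCDF p n 0 = (1 - p) ^ n := by
  simp [binomialCDF]

lemma binomialCDF_succ_succ (p : ℝ) (n k : ℕ) :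
    binomialCDF p (n + 1) (k + 1) = (1 - p) * binomialCDF p n (k + 1) + p * binomialCDF p n k := by
  simp only [binomialCDF, mul_sum]
  rw [sum_range_succ' _ (k + 1), sum_range_succ' (fun i => (1 - p) * _) (k + 1), add_right_comm,
    ← sum_add_distrib]
  congr 1
  · refine sum_congr rfl fun i _ => ?_
    rw [Nat.choose_succ_succ, Nat.cast_add, Nat.succ_sub_succ]
    rcases Nat.lt_or_ge i n with hi | hi
    · rw [show n - i = n - (i + 1) + 1 by omega]
      ring
    · rw [Nat.choose_eq_zero_of_lt (by omega : n < i + 1)]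
      ring
  · simp [pow_succ, mul_comm]

lemma binomialCDF_monotone (hp₀ : 0 ≤ p) (hp₁ : p ≤ 1) (n : ℕ) : Monotone (binomialCDF p n) :=
  fun _ _ hab => sum_le_sum_of_subset_of_nonneg (range_subset_range.mpr (by omega))
    fun _ _ _ => by have := sub_nonneg.mpr hp₁; positivity

lemma binomialCDF_pos (hp₀ : 0 ≤ p) (hp₁ : p < 1) (n k : ℕ) : 0 < binomialCDF p n k := by
  have h := binomialCDF_monotone hp₀ hp₁.le n k.zero_le
  rw [binomialCDF_zero_right] at h
  exact (pow_pos (sub_pos.mpr hp₁) n).trans_le h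

end Binomial

section Poisson

lemma poissonProb_nonneg {μ : ℝ} (hμ : 0 ≤ μ) (i : ℕ) : 0 ≤ poissonProb μ i := by
  unfold poissonProb
  positivity

@[simp]
lemma poissonProb_zero_right (μ : ℝ) : poissonProb μ 0 = exp (-μ) := by
  simp [poissonProb]

@[simp]
lemma poissonCDF_zero_left (k : ℕ) : poissonCDF 0 k = 1 := by
  rw [poissonCDF, sum_range_succ']
  simp [poissonProb]

@[simp]
lemma poissonCDF_zero_right (μ : ℝ) : poissonCDF μ 0 = exp (-μ) := by
  simp [poissonCDF]

lemma add_pow_div_factorial (x y : ℝ) (i : ℕ) :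
    (x + y) ^ i / i ! = ∑ j ∈ range (i + 1), x ^ j / j ! * (y ^ (i - j) / (i - j)!) := by
  rw [add_pow, sum_div]
  refine sum_congr rfl fun j hj => ?_
  have hji : j ≤ i := Nat.lt_succ_iff.mp (mem_range.mp hj)
  have hfac : (i.choose j : ℝ) * j ! * (i - j)! = i ! := by
    exact_mod_cast Nat.choose_mul_factorial_mul_factorial hji
  field_simp
  linear_combination x ^ j * y ^ (i - j) * hfac

lemma poissonProb_add (μ ν : ℝ) (i : ℕ) :
    poissonProb (μ + ν) i = ∑ j ∈ range (i + 1), poissonProb μ j * poissonProb ν (i - j) := by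
  rw [poissonProb, add_pow_div_factorial, neg_add, exp_add, sum_mul]
  refine sum_congr rfl fun j _ => ?_
  rw [poissonProb, poissonProb]
  ring

lemma poissonCDF_add (μ ν : ℝ) (k : ℕ) :
    poissonCDF (μ + ν) k = ∑ j ∈ range (k + 1), poissonProb μ j * poissonCDF ν (k - j) := by
  simp only [poissonCDF, poissonProb_add, mul_sum]
  rw [sum_range_diag_flip (k + 1) fun j m => poissonProb μ j * poissonProb ν m]
  refine sum_congr rfl fun j hj => ?_
  rw [show k + 1 - j = k - j + 1 by have := mem_range.mp hj; omega]

lemma poissonCDF_lt_one {μ : ℝ} (hμ : 0 < μ) (k : ℕ) : poissonCDF μ k < 1 := by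
  have hexp : ∑ i ∈ range (k + 1), μ ^ i / i ! < exp μ := by
    have := sum_le_exp_of_nonneg hμ.le (k + 2)
    rw [sum_range_succ] at this
    have : 0 < μ ^ (k + 1) / (k + 1)! := by positivity
    linarith
  calc poissonCDF μ k = (∑ i ∈ range (k + 1), μ ^ i / i !) * exp (-μ) := by
        rw [poissonCDF, sum_mul]; rfl
    _ < exp μ * exp (-μ) := mul_lt_mul_of_pos_right hexp (exp_pos _)
    _ = 1 := by rw [← exp_add, add_neg_cancel, exp_zero]

end Poisson

section Comparison

variable {μ : ℝ}

lemma poissonCDF_add_lt_binomialCDF_succ (hμ : 0 < μ) {ν : ℝ} {n : ℕ}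
    (hle : ∀ m, poissonCDF ν m ≤ binomialCDF (1 - exp (-μ)) n m) (k : ℕ) :
    poissonCDF (μ + ν) (k + 1) < binomialCDF (1 - exp (-μ)) (n + 1) (k + 1) := by
  set p := 1 - exp (-μ)
  set B := binomialCDF p n
  have hp₀ : 0 ≤ p := sub_nonneg.mpr (exp_le_one_iff.mpr (by linarith))
  have hp₁ : p < 1 := sub_lt_self _ (exp_pos _)
  have htail : ∑ j ∈ range (k + 1), poissonProb μ (j + 1) < p := by
    have := poissonCDF_lt_one hμ (k + 1)
    rw [poissonCDF, sum_range_succ'] at this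
    rw [poissonProb_zero_right] at this
    linarith
  calc poissonCDF (μ + ν) (k + 1)
      ≤ ∑ j ∈ range (k + 1 + 1), poissonProb μ j * B (k + 1 - j) := by
        rw [poissonCDF_add]
        exact sum_le_sum fun j _ =>
          mul_le_mul_of_nonneg_left (hle _) (poissonProb_nonneg hμ.le j)
    _ = ∑ j ∈ range (k + 1), poissonProb μ (j + 1) * B (k - j) + exp (-μ) * B (k + 1) := by
        rw [sum_range_succ', poissonProb_zero_right]
        simp
    _ ≤ (∑ j ∈ range (k + 1), poissonProb μ (j + 1)) * B k + exp (-μ) * B (k + 1) := by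
        rw [sum_mul]
        gcongr with j
        · exact poissonProb_nonneg hμ.le _
        · exact binomialCDF_monotone hp₀ hp₁.le n (Nat.sub_le k j)
    _ < p * B k + exp (-μ) * B (k + 1) := by
        gcongr
        exact binomialCDF_pos hp₀ hp₁ n k
    _ = binomialCDF p (n + 1) (k + 1) := by
        rw [binomialCDF_succ_succ, sub_sub_cancel]
        ring

lemma poissonCDF_natCast_mul_le_binomialCDF (hμ : 0 < μ) (n k : ℕ) :
    poissonCDF (n * μ) k ≤ binomialCDF (1 - exp (-μ)) n k := by
  induction n generalizing k with
  | zero => simp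
  | succ n ih =>
    rcases k with _ | k
    · rw [poissonCDF_zero_right, binomialCDF_zero_right, sub_sub_cancel, ← exp_nat_mul, mul_neg]
    · rw [Nat.cast_succ, add_one_mul, add_comm]
      exact (poissonCDF_add_lt_binomialCDF_succ hμ ih k).le

lemma poissonCDF_natCast_mul_lt_binomialCDF (hμ : 0 < μ) {n k : ℕ} (hn : 1 ≤ n) (hk : 1 ≤ k) :
    poissonCDF (n * μ) k < binomialCDF (1 - exp (-μ)) n k := by
  obtain ⟨n, rfl⟩ := Nat.exists_eq_add_of_le' hn
  obtain ⟨k, rfl⟩ := Nat.exists_eq_add_of_le' hk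
  rw [Nat.cast_succ, add_one_mul, add_comm]
  exact poissonCDF_add_lt_binomialCDF_succ hμ (poissonCDF_natCast_mul_le_binomialCDF hμ n) k

end Comparison

theorem binomial_cdf_gt_poisson_cdf_general (θ : ℝ) (hθ : 1 < θ) (N : ℕ) :
    (∑ i ∈ range (0 + 1), (N.choose i : ℝ) * (1 - 1/θ) ^ i * (1/θ) ^ (N - i)) =
      (∑ i ∈ range (0 + 1),
        ((N : ℝ) * Real.log θ) ^ i / (Nat.factorial i) * Real.exp (-((N : ℝ) * Real.log θ))) ∧
    ∀ k : ℕ, 1 ≤ k → k ≤ N →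
      (∑ i ∈ range (k + 1), (N.choose i : ℝ) * (1 - 1/θ) ^ i * (1/θ) ^ (N - i)) >
      (∑ i ∈ range (k + 1),
        ((N : ℝ) * Real.log θ) ^ i / (Nat.factorial i) * Real.exp (-((N : ℝ) * Real.log θ))) := by
  have hμ : 0 < log θ := log_pos hθ
  have hinv : 1 / θ = exp (-log θ) := by rw [exp_neg, exp_log (by linarith), one_div]
  have hB : ∀ k, ∑ i ∈ range (k + 1), (N.choose i : ℝ) * (1 - 1/θ) ^ i * (1/θ) ^ (N - i)
      = binomialCDF (1 - exp (-log θ)) N k := by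
    intro k
    rw [binomialCDF, sub_sub_cancel, hinv]
  refine ⟨?_, fun k hk hkN => ?_⟩
  · rw [hB, binomialCDF_zero_right, sub_sub_cancel, ← exp_nat_mul, mul_neg]
    simp
  · rw [hB]
    exact poissonCDF_natCast_mul_lt_binomialCDF hμ (hk.trans hkN) hk

theorem binomial_cdf_gt_poisson_cdf (θ : ℝ) (hθ : 1 < θ) (N : ℕ) (hN : 1 ≤ N) :
    (∑ i ∈ range (0 + 1), (N.choose i : ℝ) * (1 - 1/θ) ^ i * (1/θ) ^ (N - i)) =
      (∑ i ∈ range (0 + 1),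
        ((N : ℝ) * Real.log θ) ^ i / (Nat.factorial i) * Real.exp (-((N : ℝ) * Real.log θ))) ∧
    ∀ k : ℕ, 1 ≤ k → k ≤ N →
      (∑ i ∈ range (k + 1), (N.choose i : ℝ) * (1 - 1/θ) ^ i * (1/θ) ^ (N - i)) >
      (∑ i ∈ range (k + 1),
        ((N : ℝ) * Real.log θ) ^ i / (Nat.factorial i) * Real.exp (-((N : ℝ) * Real.log θ))) :=
  binomial_cdf_gt_poisson_cdf_general θ hθ N
end

section
/- Let A ⊇ B be measurable subsets of ℝ^d with finite positive Lebesgue measures V_A and V_B. Let X_1,...,X_m be i.i.d. uniform on A and Y_1,...,Y_n be i.i.d. uniform on B (with m ≤ n), all mutually independent. Define Z_1,...,Z_n by: let k(ω) be the number of indices i with X_i(ω) ∈ B, let i_1 < ... < i_{k(ω)} be those indices, and set Z_ℓ(ω) = X_{i_ℓ}(ω) for 1 ≤ ℓ ≤ k(ω) and Z_ℓ(ω) = Y_ℓ(ω) for k(ω) < ℓ ≤ n. Then Z_1,...,Z_n are i.i.d. uniform on B; i.e., for any measurable sets S_1,...,S_n ⊆ B, P(Z_ℓ ∈ S_ℓ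 for all ℓ) = Π_{ℓ=1}^{n} (vol(S_ℓ)/V_B). -/
/-!
Split the event according to the set `T` of indices `i` with `X i ∈ B`. On `{i | X i ∈ B} = T`
the event `∀ ℓ, Z ℓ ∈ S ℓ` is a product event: the `X i` with `i ∈ T` must lie in the `S` indexed
by the rank of `i` in `T`, the other `X i` must avoid `B`, and `Y ℓ` must lie in `S ℓ` for
`ℓ ≥ #T`. By independence it has probability
`(V_B / V_A) ^ #T * (V_{A \ B} / V_A) ^ (m - #T) * ∏ ℓ, vol (S ℓ) / V_B`,
and summing over `T` the binomial weights add up to `(V_B / V_A + V_{A \ B} / V_A) ^ m = 1`.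
-/

open MeasureTheory ProbabilityTheory Function
open scoped ENNReal

/-- The sample-reuse construction: `Z ℓ ω` is `X (i_ℓ) ω` when `ℓ` is below the number
`k(ω)` of indices `i` with `X i ω ∈ B` (where `i_1 < i_2 < …` enumerate those indices in
increasing order), and `Y ℓ ω` otherwise. -/
noncomputable def reuseZ {Ω : Type*} {E : Type*} {m n : ℕ}
    (X : Fin m → Ω → E) (Y : Fin n → Ω → E) (B : Set E) (ℓ : Fin n) (ω : Ω) : E := by
  classical
  exact
    let l := (Finset.univ.filter (fun i : Fin m => X i ω ∈ B)).sort (· ≤ ·)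
    if h : (ℓ : ℕ) < l.length then X (l.get ⟨ℓ, h⟩) ω else Y ℓ ω

theorem Finset.prod_range_mul_prod_Ico_of_eq_one {M : Type*} [CommMonoid M] {f : ℕ → M} {n : ℕ}
    (hf : ∀ k, n ≤ k → f k = 1) (K : ℕ) :
    (∏ k ∈ Finset.range K, f k) * ∏ k ∈ Finset.Ico K n, f k = ∏ k ∈ Finset.range n, f k := by
  rcases le_total K n with hKn | hnK
  · exact Finset.prod_range_mul_prod_Ico f hKn
  · rw [Finset.Ico_eq_empty_of_le hnK, Finset.prod_empty, mul_one,
      ← Finset.prod_range_mul_prod_Ico f hnK,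
      Finset.prod_eq_one fun k hk => hf k (Finset.mem_Ico.1 hk).1, mul_one]

section Events

variable {Ω E : Type*} {m n : ℕ}

/-- Samples `X i` of rank `k ≥ n` in `T` are never read by `reuseZ`; they are only constrained to
lie in `B`. -/
def reuseTarget (B : Set E) (S : Fin n → Set E) (k : ℕ) : Set E :=
  if h : k < n then S ⟨k, h⟩ else B

/-- `(T.orderIsoOfFin rfl).symm ⟨i, hi⟩` is the rank of `i` in `T`, i.e. the `ℓ` with
`reuseZ X Y B ℓ = X i` on `{i | X i ∈ B} = T`. -/
def reuseConstraint (B : Set E) (S : Fin n → Set E) (T : Finset (Fin m)) :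
    Fin m ⊕ Fin n → Set E :=
  Sum.elim
    (fun i => if hi : i ∈ T then reuseTarget B S ((T.orderIsoOfFin rfl).symm ⟨i, hi⟩) else Bᶜ)
    (fun ℓ => if T.card ≤ ℓ then S ℓ else Set.univ)

def reuseEvent (X : Fin m → Ω → E) (Y : Fin n → Ω → E) (B : Set E) (S : Fin n → Set E)
    (T : Finset (Fin m)) : Set Ω :=
  ⋂ j, Sum.elim X Y j ⁻¹' reuseConstraint B S T j

variable {X : Fin m → Ω → E} {Y : Fin n → Ω → E} {B : Set E} {S : Fin n → Set E}
  {T : Finset (Fin m)} {ω : Ω}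

lemma reuseTarget_subset (hSB : ∀ ℓ, S ℓ ⊆ B) (k : ℕ) : reuseTarget B S k ⊆ B := by
  unfold reuseTarget
  split_ifs
  exacts [hSB _, subset_rfl]

lemma reuseZ_eq_of_forall_mem_iff (hT : ∀ i, X i ω ∈ B ↔ i ∈ T) (ℓ : Fin n) :
    reuseZ X Y B ℓ ω =
      if h : (ℓ : ℕ) < T.card then X (T.orderIsoOfFin rfl ⟨ℓ, h⟩) ω else Y ℓ ω := by
  classical
  obtain rfl : Finset.univ.filter (fun i => X i ω ∈ B) = T := by ext i; simp [hT i]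
  unfold reuseZ
  simp only [Finset.length_sort, Finset.coe_orderIsoOfFin_apply, Finset.orderEmbOfFin_apply]
  congr

lemma forall_reuseZ_mem_iff_mem_reuseEvent (hT : ∀ i, X i ω ∈ B ↔ i ∈ T) :
    (∀ ℓ, reuseZ X Y B ℓ ω ∈ S ℓ) ↔ ω ∈ reuseEvent X Y B S T := by
  simp only [reuseZ_eq_of_forall_mem_iff hT, reuseEvent, Set.mem_iInter, Set.mem_preimage,
    Sum.forall, Sum.elim_inl, Sum.elim_inr, reuseConstraint]
  set e := T.orderIsoOfFin rfl
  constructor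
  · intro hZ
    refine ⟨fun i => ?_, fun ℓ => ?_⟩
    · by_cases hi : i ∈ T
      · rw [dif_pos hi, reuseTarget]
        split_ifs with hn
        · simpa [hn, e] using hZ ⟨e.symm ⟨i, hi⟩, hn⟩
        · exact (hT i).2 hi
      · rw [dif_neg hi]
        exact fun hB => hi ((hT i).1 hB)
    · split_ifs with hℓ
      · simpa [not_lt.2 hℓ] using hZ ℓ
      · trivial
  · rintro ⟨hX, hY⟩ ℓ
    split_ifs with hℓ
    · have hXℓ := hX (e ⟨ℓ, hℓ⟩)
      rwa [dif_pos (e _).2, Subtype.coe_eta, OrderIso.symm_apply_apply, reuseTarget,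
        dif_pos ℓ.2] at hXℓ
    · simpa [not_lt.1 hℓ] using hY ℓ

lemma mem_iff_of_mem_reuseEvent (hSB : ∀ ℓ, S ℓ ⊆ B) (hω : ω ∈ reuseEvent X Y B S T)
    (i : Fin m) : X i ω ∈ B ↔ i ∈ T := by
  have hXi : X i ω ∈ reuseConstraint B S T (.inl i) := Set.mem_iInter.1 hω (.inl i)
  by_cases hi : i ∈ T
  · simp only [reuseConstraint, Sum.elim_inl, dif_pos hi] at hXi
    exact iff_of_true (reuseTarget_subset hSB _ hXi) hi
  · simp only [reuseConstraint, Sum.elim_inl, dif_neg hi] at hXi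
    exact iff_of_false hXi hi

lemma setOf_forall_reuseZ_mem_eq_iUnion (hSB : ∀ ℓ, S ℓ ⊆ B) :
    {ω | ∀ ℓ, reuseZ X Y B ℓ ω ∈ S ℓ} = ⋃ T, reuseEvent X Y B S T := by
  classical
  ext ω
  simp only [Set.mem_ofPred_eq, Set.mem_iUnion]
  constructor
  · intro hZ
    have hT : ∀ i, X i ω ∈ B ↔ i ∈ Finset.univ.filter (fun i => X i ω ∈ B) := by simp
    exact ⟨_, (forall_reuseZ_mem_iff_mem_reuseEvent hT).1 hZ⟩
  · rintro ⟨T, hω⟩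
    exact (forall_reuseZ_mem_iff_mem_reuseEvent (mem_iff_of_mem_reuseEvent hSB hω)).2 hω

lemma pairwise_disjoint_reuseEvent (hSB : ∀ ℓ, S ℓ ⊆ B) :
    Pairwise (Disjoint on reuseEvent X Y B S) := by
  refine fun T T' hne => Set.disjoint_left.2 fun ω hω hω' => hne ?_
  ext i
  rw [← mem_iff_of_mem_reuseEvent hSB hω, mem_iff_of_mem_reuseEvent hSB hω']

end Events

section Probability

variable {Ω E : Type*} [MeasurableSpace Ω] [MeasurableSpace E] {P : Measure Ω} {μ : Measure E}
  {m n : ℕ} {X : Fin m → Ω → E} {Y : Fin n → Ω → E} {A B : Set E} {S : Fin n → Set E}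

lemma measurableSet_reuseConstraint (hBmeas : MeasurableSet B) (hSmeas : ∀ ℓ, MeasurableSet (S ℓ))
    (T : Finset (Fin m)) (j : Fin m ⊕ Fin n) : MeasurableSet (reuseConstraint B S T j) := by
  rcases j with i | ℓ
  · by_cases hi : i ∈ T
    · simp only [reuseConstraint, Sum.elim_inl, dif_pos hi, reuseTarget]
      split_ifs
      exacts [hSmeas _, hBmeas]
    · simpa [reuseConstraint, hi] using hBmeas.compl
  · simp only [reuseConstraint, Sum.elim_inr]
    split_ifs
    exacts [hSmeas ℓ, .univ]

lemma prod_measure_preimage_reuseConstraint_inl (hBA : B ⊆ A) (hB0 : μ B ≠ 0) (hAtop : μ A ≠ ∞)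
    (hBmeas : MeasurableSet B) (hSmeas : ∀ ℓ, MeasurableSet (S ℓ)) (hSB : ∀ ℓ, S ℓ ⊆ B)
    (hX : ∀ i, pdf.IsUniform (X i) A P μ) (T : Finset (Fin m)) :
    ∏ i, P (X i ⁻¹' reuseConstraint B S T (.inl i)) =
      (μ B / μ A) ^ T.card * (∏ k ∈ Finset.range T.card, μ (reuseTarget B S k) / μ B) *
        (μ (A \ B) / μ A) ^ (m - T.card) := by
  classical
  have hA0 : μ A ≠ 0 := fun h => hB0 (measure_mono_null hBA h)
  have hBtop : μ B ≠ ∞ := ne_top_of_le_ne_top hAtop (measure_mono hBA)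
  have hTarget (k : Fin T.card) :
      P (X (T.orderIsoOfFin rfl k) ⁻¹' reuseConstraint B S T (.inl (T.orderIsoOfFin rfl k))) =
        μ B / μ A * (μ (reuseTarget B S k) / μ B) := by
    have hsub : reuseTarget B S k ⊆ A := (reuseTarget_subset hSB k).trans hBA
    rw [(hX _).measure_preimage hA0 hAtop (measurableSet_reuseConstraint hBmeas hSmeas T _),
      reuseConstraint, Sum.elim_inl, dif_pos (T.orderIsoOfFin rfl k).2, Subtype.coe_eta,
      OrderIso.symm_apply_apply, Set.inter_eq_self_of_subset_right hsub, mul_comm, ← mul_div_assoc,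
      ENNReal.div_mul_cancel hB0 hBtop]
  have hOutside (i : Fin m) (hi : i ∈ Tᶜ) :
      P (X i ⁻¹' reuseConstraint B S T (.inl i)) = μ (A \ B) / μ A := by
    rw [(hX i).measure_preimage hA0 hAtop (measurableSet_reuseConstraint hBmeas hSmeas T _),
      reuseConstraint, Sum.elim_inl, dif_neg (Finset.mem_compl.1 hi), Set.sdiff_eq]
  rw [← Finset.prod_mul_prod_compl T, ← Finset.prod_coe_sort T,
    ← (T.orderIsoOfFin rfl).toEquiv.prod_comp]
  simp only [OrderIso.coe_toEquiv, hTarget, Finset.prod_mul_distrib, Finset.prod_const,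
    Finset.card_univ, Fintype.card_fin, Finset.prod_congr rfl hOutside, Finset.card_compl,
    Fin.prod_univ_eq_prod_range (fun k => μ (reuseTarget B S k) / μ B)]

lemma prod_measure_preimage_reuseConstraint_inr (hB0 : μ B ≠ 0) (hBtop : μ B ≠ ∞)
    (hBmeas : MeasurableSet B) (hSmeas : ∀ ℓ, MeasurableSet (S ℓ)) (hSB : ∀ ℓ, S ℓ ⊆ B)
    (hY : ∀ ℓ, pdf.IsUniform (Y ℓ) B P μ) (T : Finset (Fin m)) :
    ∏ ℓ, P (Y ℓ ⁻¹' reuseConstraint B S T (.inr ℓ)) =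
      ∏ k ∈ Finset.Ico T.card n, μ (reuseTarget B S k) / μ B := by
  have hFactor (ℓ : Fin n) : P (Y ℓ ⁻¹' reuseConstraint B S T (.inr ℓ)) =
      if T.card ≤ (ℓ : ℕ) then μ (reuseTarget B S ℓ) / μ B else 1 := by
    rw [(hY ℓ).measure_preimage hB0 hBtop (measurableSet_reuseConstraint hBmeas hSmeas T _),
      reuseConstraint, Sum.elim_inr, reuseTarget, dif_pos ℓ.2]
    split_ifs
    · rw [Set.inter_eq_self_of_subset_right (hSB ℓ)]
    · rw [Set.inter_univ, ENNReal.div_self hB0 hBtop]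
  have hIco : Finset.Ico T.card n = (Finset.range n).filter (T.card ≤ ·) := by
    ext k
    simp [and_comm]
  rw [Finset.prod_congr rfl fun ℓ _ => hFactor ℓ,
    Fin.prod_univ_eq_prod_range (fun k => if T.card ≤ k then μ (reuseTarget B S k) / μ B else 1),
    hIco, Finset.prod_filter]

lemma measure_reuseEvent (hBA : B ⊆ A) (hB0 : μ B ≠ 0) (hAtop : μ A ≠ ∞)
    (hBmeas : MeasurableSet B) (hSmeas : ∀ ℓ, MeasurableSet (S ℓ)) (hSB : ∀ ℓ, S ℓ ⊆ B)
    (hX : ∀ i, pdf.IsUniform (X i) A P μ) (hY : ∀ ℓ, pdf.IsUniform (Y ℓ) B P μ)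
    (hindep : iIndepFun (Sum.elim X Y) P) (T : Finset (Fin m)) :
    P (reuseEvent X Y B S T) =
      (μ B / μ A) ^ T.card * (μ (A \ B) / μ A) ^ (m - T.card) * ∏ ℓ, μ (S ℓ) / μ B := by
  have hBtop : μ B ≠ ∞ := ne_top_of_le_ne_top hAtop (measure_mono hBA)
  have hOne (k : ℕ) (hk : n ≤ k) : μ (reuseTarget B S k) / μ B = 1 := by
    rw [reuseTarget, dif_neg (not_lt.2 hk), ENNReal.div_self hB0 hBtop]
  have hS : ∏ ℓ, μ (S ℓ) / μ B = ∏ k ∈ Finset.range n, μ (reuseTarget B S k) / μ B := by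
    rw [← Fin.prod_univ_eq_prod_range]
    simp [reuseTarget]
  rw [reuseEvent,
    hindep.meas_iInter fun j => ⟨_, measurableSet_reuseConstraint hBmeas hSmeas T j, rfl⟩,
    Fintype.prod_sum_type]
  simp only [Sum.elim_inl, Sum.elim_inr]
  rw [prod_measure_preimage_reuseConstraint_inl hBA hB0 hAtop hBmeas hSmeas hSB hX,
    prod_measure_preimage_reuseConstraint_inr hB0 hBtop hBmeas hSmeas hSB hY, hS,
    ← Finset.prod_range_mul_prod_Ico_of_eq_one hOne T.card]
  ring

lemma measure_div_add_measure_sdiff_div (hB : NullMeasurableSet B μ) (hBA : B ⊆ A)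
    (hA0 : μ A ≠ 0) (hAtop : μ A ≠ ∞) : μ B / μ A + μ (A \ B) / μ A = 1 := by
  rw [ENNReal.div_add_div_same, measure_add_sdiff hB, Set.union_eq_self_of_subset_left hBA,
    ENNReal.div_self hA0 hAtop]

theorem measure_forall_reuseZ_mem (hBA : B ⊆ A) (hB0 : μ B ≠ 0) (hAtop : μ A ≠ ∞)
    (hBmeas : MeasurableSet B) (hSmeas : ∀ ℓ, MeasurableSet (S ℓ)) (hSB : ∀ ℓ, S ℓ ⊆ B)
    (hX : ∀ i, pdf.IsUniform (X i) A P μ) (hY : ∀ ℓ, pdf.IsUniform (Y ℓ) B P μ)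
    (hindep : iIndepFun (Sum.elim X Y) P) :
    P {ω | ∀ ℓ, reuseZ X Y B ℓ ω ∈ S ℓ} = ∏ ℓ, μ (S ℓ) / μ B := by
  have hA0 : μ A ≠ 0 := fun h => hB0 (measure_mono_null hBA h)
  have hBtop : μ B ≠ ∞ := ne_top_of_le_ne_top hAtop (measure_mono hBA)
  have hW : ∀ j, AEMeasurable (Sum.elim X Y j) P
    | .inl i => (hX i).aemeasurable hA0 hAtop
    | .inr ℓ => (hY ℓ).aemeasurable hB0 hBtop
  rw [setOf_forall_reuseZ_mem_eq_iUnion hSB,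
    measure_iUnion₀ ((pairwise_disjoint_reuseEvent hSB).mono fun _ _ h => h.aedisjoint)
      fun T => .iInter fun j =>
        (hW j).nullMeasurable (measurableSet_reuseConstraint hBmeas hSmeas T j),
    tsum_fintype]
  simp_rw [measure_reuseEvent hBA hB0 hAtop hBmeas hSmeas hSB hX hY hindep]
  rw [← Finset.sum_mul, Fin.sum_pow_mul_eq_add_pow,
    measure_div_add_measure_sdiff_div hBmeas.nullMeasurableSet hBA hA0 hAtop, one_pow, one_mul]

end Probability

theorem reuse_samples_iid_uniform_general {Ω : Type*} [MeasurableSpace Ω] (P : Measure Ω)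
    (d m n : ℕ) (A B : Set (Fin d → ℝ)) (hBA : B ⊆ A)
    (hBmeas : MeasurableSet B) (hAfin : volume A < ⊤) (hBpos : 0 < volume B)
    (X : Fin m → Ω → (Fin d → ℝ)) (Y : Fin n → Ω → (Fin d → ℝ))
    (hXunif : ∀ i, pdf.IsUniform (X i) A P volume)
    (hYunif : ∀ j, pdf.IsUniform (Y j) B P volume)
    (hindep : iIndepFun
      (Sum.elim X Y : Fin m ⊕ Fin n → Ω → (Fin d → ℝ)) P)
    (S : Fin n → Set (Fin d → ℝ)) (hSmeas : ∀ ℓ, MeasurableSet (S ℓ))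
    (hSB : ∀ ℓ, S ℓ ⊆ B) :
    P {ω | ∀ ℓ : Fin n, reuseZ X Y B ℓ ω ∈ S ℓ} =
      ∏ ℓ : Fin n, volume (S ℓ) / volume B :=
  measure_forall_reuseZ_mem hBA hBpos.ne' hAfin.ne hBmeas hSmeas hSB hXunif hYunif hindep

/-- Theorem 2 (sample reuse): if `X_1, …, X_m` are i.i.d. uniform on `A`, `Y_1, …, Y_n`
are i.i.d. uniform on `B ⊆ A`, all mutually independent, `m ≤ n`, then the reused samples
`Z_1, …, Z_n` are i.i.d. uniform on `B`: for measurable `S_ℓ ⊆ B`,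
`P(Z_ℓ ∈ S_ℓ ∀ℓ) = Π_ℓ vol(S_ℓ)/vol(B)`. -/
theorem reuse_samples_iid_uniform {Ω : Type*} [MeasurableSpace Ω] (P : Measure Ω)
    [IsProbabilityMeasure P] (d m n : ℕ) (hmn : m ≤ n)
    (A B : Set (Fin d → ℝ)) (hBA : B ⊆ A) (hAmeas : MeasurableSet A)
    (hBmeas : MeasurableSet B) (hAfin : volume A < ⊤) (hBpos : 0 < volume B)
    (X : Fin m → Ω → (Fin d → ℝ)) (Y : Fin n → Ω → (Fin d → ℝ))
    (hXunif : ∀ i, pdf.IsUniform (X i) A P volume)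
    (hYunif : ∀ j, pdf.IsUniform (Y j) B P volume)
    (hXmeas : ∀ i, Measurable (X i)) (hYmeas : ∀ j, Measurable (Y j))
    (hindep : iIndepFun
      (Sum.elim X Y : Fin m ⊕ Fin n → Ω → (Fin d → ℝ)) P)
    (S : Fin n → Set (Fin d → ℝ)) (hSmeas : ∀ ℓ, MeasurableSet (S ℓ))
    (hSB : ∀ ℓ, S ℓ ⊆ B) :
    P {ω | ∀ ℓ : Fin n, reuseZ X Y B ℓ ω ∈ S ℓ} =
      ∏ ℓ : Fin n, volume (S ℓ) / volume B :=
  reuse_samples_iid_uniform_general P d m n A B hBA hBmeas hAfin hBpos X Y hXunif hYunif hindep S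
    hSmeas hSB
end

section
/- Let g(s) = Σ_{ℓ=2}^{m} ln(p_ℓ s + 1 − p_ℓ) with p_ℓ = 1 − v_ℓ/v_{ℓ−1}, v_1 > ... > v_m > 0, for s ∈ (0,1], and let I_2(s) = (s−1)·Σ_{ℓ=2}^m (v_{ℓ−1} − v_ℓ)/v_ℓ. Then |g(s) − I_2(s)| ≤ (s² + 1)(v_1 − v_m)ν / (2 v_m²), where ν = max_ℓ(v_{ℓ−1} − v_ℓ). -/
/-!
Writing `d = v_{ℓ-1} - v_ℓ` and `x = d / v_ℓ`, the `ℓ`-th summand of `g(s)` is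
`log (1 + s x) - log (1 + x)` and that of `I₂(s)` is `(s - 1) x`. On `x ≥ 0` the bounds
`x - x² / 2 ≤ log (1 + x) ≤ x` make the two differ by at most `(s² + 1) x² / 2`, and
`x² ≤ d ν / v_m²`; summing, the differences `d` telescope to `v_1 - v_m`.
-/

open Finset

theorem Finset.sum_Icc_pred_sub {M : Type*} [AddCommGroup M] (f : ℕ → M) {a b : ℕ}
    (hab : a ≤ b) : ∑ ℓ ∈ Icc (a + 1) b, (f (ℓ - 1) - f ℓ) = f a - f b := by
  induction b, hab using Nat.le_induction with
  | base => simp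
  | succ n han ih =>
    rw [sum_Icc_succ_top (by omega), ih, Nat.add_sub_cancel]
    abel

namespace Real

theorem sub_sq_div_two_le_log_one_add {x : ℝ} (hx : 0 ≤ x) : x - x ^ 2 / 2 ≤ log (1 + x) := by
  refine le_trans ?_ (le_log_one_add_of_nonneg hx)
  rw [le_div_iff₀ (by positivity)]
  nlinarith [pow_nonneg hx 3]

theorem log_one_add_le_self {x : ℝ} (hx : -1 < x) : log (1 + x) ≤ x := by
  linarith [log_le_sub_one_of_pos (show 0 < 1 + x by linarith)]

theorem abs_log_one_add_mul_sub_log_one_add_sub_le {x s : ℝ} (hx : 0 ≤ x) (hs : 0 ≤ s) :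
    |log (1 + s * x) - log (1 + x) - (s - 1) * x| ≤ (s ^ 2 + 1) * x ^ 2 / 2 := by
  have hsx : 0 ≤ s * x := mul_nonneg hs hx
  have := sub_sq_div_two_le_log_one_add hsx
  have := sub_sq_div_two_le_log_one_add hx
  have := log_one_add_le_self (show -1 < s * x by linarith)
  have := log_one_add_le_self (show -1 < x by linarith)
  rw [abs_le]
  constructor <;> nlinarith [sq_nonneg x, sq_nonneg s]

theorem abs_log_one_sub_div_mul_add_div_sub_le {a b s : ℝ} (hb : 0 < b) (hba : b ≤ a) (hs : 0 ≤ s) :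
    |log ((1 - b / a) * s + b / a) - (s - 1) * ((a - b) / b)| ≤
      (s ^ 2 + 1) * ((a - b) / b) ^ 2 / 2 := by
  have ha : 0 < a := hb.trans_le hba
  have hx : 0 ≤ (a - b) / b := div_nonneg (sub_nonneg.mpr hba) hb.le
  have hlog : log ((1 - b / a) * s + b / a) =
      log (1 + s * ((a - b) / b)) - log (1 + (a - b) / b) := by
    rw [← log_div (by positivity) (by positivity)]
    congr 1
    field_simp [ha.ne', hb.ne']
    ring
  rw [hlog]
  exact abs_log_one_add_mul_sub_log_one_add_sub_le hx hs

end Real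

theorem sq_div_le_mul_div_sq {b c d ν : ℝ} (hc : 0 < c) (hcb : c ≤ b) (hd : 0 ≤ d)
    (hdν : d ≤ ν) : (d / b) ^ 2 ≤ d * ν / c ^ 2 := by
  calc (d / b) ^ 2 ≤ (d / c) ^ 2 := by
        gcongr
        exact div_nonneg hd (hc.trans_le hcb).le
    _ = d * d / c ^ 2 := by ring
    _ ≤ d * ν / c ^ 2 := by gcongr

theorem log_pgf_close_to_linear_general (m : ℕ) (hm : 2 ≤ m) (v : ℕ → ℝ)
    (hpos : ∀ ℓ, 1 ≤ ℓ → ℓ ≤ m → 0 < v ℓ)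
    (hdec : ∀ ℓ, 2 ≤ ℓ → ℓ ≤ m → v ℓ < v (ℓ - 1))
    (ν : ℝ) (hν : ∀ ℓ, 2 ≤ ℓ → ℓ ≤ m → v (ℓ - 1) - v ℓ ≤ ν)
    (s : ℝ) (hs : 0 < s) :
    |(∑ ℓ ∈ Finset.Icc 2 m,
        Real.log ((1 - v ℓ / v (ℓ - 1)) * s + v ℓ / v (ℓ - 1))) -
      (s - 1) * ∑ ℓ ∈ Finset.Icc 2 m, (v (ℓ - 1) - v ℓ) / v ℓ| ≤
      (s ^ 2 + 1) * (v 1 - v m) * ν / (2 * (v m) ^ 2) := by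
  have hvm : 0 < v m := hpos m (by omega) le_rfl
  have hmin : ∀ ℓ, 1 ≤ ℓ → ℓ ≤ m → v m ≤ v ℓ := fun ℓ _ hℓm => by
    have := sum_Icc_pred_sub v hℓm
    have : 0 ≤ ∑ k ∈ Icc (ℓ + 1) m, (v (k - 1) - v k) := sum_nonneg fun k hk => by
      have := mem_Icc.mp hk
      linarith [hdec k (by omega) this.2]
    linarith
  set C := (s ^ 2 + 1) * ν / (2 * v m ^ 2)
  have hterm : ∀ ℓ ∈ Icc 2 m, |Real.log ((1 - v ℓ / v (ℓ - 1)) * s + v ℓ / v (ℓ - 1)) -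
      (s - 1) * ((v (ℓ - 1) - v ℓ) / v ℓ)| ≤ C * (v (ℓ - 1) - v ℓ) := fun ℓ hℓ => by
    obtain ⟨h2ℓ, hℓm⟩ := mem_Icc.mp hℓ
    have hd := hdec ℓ h2ℓ hℓm
    calc _ ≤ (s ^ 2 + 1) * ((v (ℓ - 1) - v ℓ) / v ℓ) ^ 2 / 2 :=
          Real.abs_log_one_sub_div_mul_add_div_sub_le (hpos ℓ (by omega) hℓm) hd.le hs.le
      _ ≤ (s ^ 2 + 1) * ((v (ℓ - 1) - v ℓ) * ν / v m ^ 2) / 2 := by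
          gcongr
          exact sq_div_le_mul_div_sq hvm (hmin ℓ (by omega) hℓm) (by linarith) (hν ℓ h2ℓ hℓm)
      _ = C * (v (ℓ - 1) - v ℓ) := by ring
  calc _ = |∑ ℓ ∈ Icc 2 m, (Real.log ((1 - v ℓ / v (ℓ - 1)) * s + v ℓ / v (ℓ - 1)) -
        (s - 1) * ((v (ℓ - 1) - v ℓ) / v ℓ))| := by rw [mul_sum, sum_sub_distrib]
    _ ≤ ∑ ℓ ∈ Icc 2 m, C * (v (ℓ - 1) - v ℓ) := (abs_sum_le_sum_abs _ _).trans (sum_le_sum hterm)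
    _ = C * (v 1 - v m) := by rw [← mul_sum, sum_Icc_pred_sub v (by omega)]
    _ = (s ^ 2 + 1) * (v 1 - v m) * ν / (2 * (v m) ^ 2) := by ring

/-- With `p_ℓ = 1 − v_ℓ/v_{ℓ−1}`, `g(s) = Σ_{ℓ=2}^m ln(p_ℓ s + 1 − p_ℓ)` and
`I₂(s) = (s−1)·Σ_{ℓ=2}^m (v_{ℓ−1} − v_ℓ)/v_ℓ`, one has
`|g(s) − I₂(s)| ≤ (s² + 1)(v_1 − v_m)ν / (2 v_m²)`, where `ν` bounds the mesh. -/
theorem log_pgf_close_to_linear (m : ℕ) (hm : 2 ≤ m) (v : ℕ → ℝ)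
    (hpos : ∀ ℓ, 1 ≤ ℓ → ℓ ≤ m → 0 < v ℓ)
    (hdec : ∀ ℓ, 2 ≤ ℓ → ℓ ≤ m → v ℓ < v (ℓ - 1))
    (ν : ℝ) (hν : ∀ ℓ, 2 ≤ ℓ → ℓ ≤ m → v (ℓ - 1) - v ℓ ≤ ν)
    (s : ℝ) (hs : 0 < s) (hs1 : s ≤ 1) :
    |(∑ ℓ ∈ Finset.Icc 2 m,
        Real.log ((1 - v ℓ / v (ℓ - 1)) * s + v ℓ / v (ℓ - 1))) -
      (s - 1) * ∑ ℓ ∈ Finset.Icc 2 m, (v (ℓ - 1) - v ℓ) / v ℓ| ≤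
      (s ^ 2 + 1) * (v 1 - v m) * ν / (2 * (v m) ^ 2) :=
  log_pgf_close_to_linear_general m hm v hpos hdec ν hν s hs
end
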